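/- arXiv:2504.04509 — 10 statements merged into one kernel-verified Lean document; each statement's English description precedes it below -/
import Mathlib

section
/- Let μ > 0, λ > 0, a ∈ ℝ, and define ψ(x; a) = φ_μ(x) + (1/(2λ))(x − a)². If |a| < √(μ² + 2λ), then x† = (μ²/(μ² + 2λ)) a is a global minimizer of ψ(·; a), i.e., ψ(x†; a) ≤ ψ(x; a) for all x ∈ ℝ. -/
/-- Scalar truncated Huber function: φ_μ(t) = min(1, t²/μ²). -/
noncomputable def phiTH (μ t : ℝ) : ℝ := min 1 (t ^ 2 / μ ^ 2)

/-- The function ψ(x; a) = φ_μ(x) + (1/(2λ))(x − a)². -/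
noncomputable def psiTH (μ lam a x : ℝ) : ℝ := phiTH μ x + (1 / (2 * lam)) * (x - a) ^ 2

theorem stmt4 (μ lam a : ℝ) (hμ : 0 < μ) (hlam : 0 < lam)
    (ha : |a| < Real.sqrt (μ ^ 2 + 2 * lam)) :
    ∀ x : ℝ, psiTH μ lam a ((μ ^ 2 / (μ ^ 2 + 2 * lam)) * a) ≤ psiTH μ lam a x := by
  intro x
  have hc0 : (0:ℝ) < μ ^ 2 + 2 * lam := by positivity
  have ha2 : a ^ 2 < μ ^ 2 + 2 * lam := by
    have h1 : |a| ^ 2 < Real.sqrt (μ ^ 2 + 2 * lam) ^ 2 :=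
      pow_lt_pow_left₀ ha (abs_nonneg a) (by norm_num)
    rwa [sq_abs, Real.sq_sqrt hc0.le] at h1
  set c := μ ^ 2 + 2 * lam with hcdef
  have hmin : phiTH μ (μ ^ 2 / c * a) = (μ ^ 2 / c * a) ^ 2 / μ ^ 2 := by
    apply min_eq_right
    rw [div_le_one (by positivity)]
    have h2 : (μ ^ 2 / c * a) ^ 2 = μ ^ 4 * a ^ 2 / c ^ 2 := by field_simp
    rw [h2, div_le_iff₀ (by positivity)]
    have h4 : μ ^ 4 * a ^ 2 ≤ μ ^ 4 * c := by nlinarith [pow_pos hμ 4]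
    have h5 : μ ^ 4 * c ≤ μ ^ 2 * c ^ 2 := by
      nlinarith [mul_nonneg (mul_nonneg (sq_nonneg μ) hc0.le)
        (show (0:ℝ) ≤ c - μ ^ 2 by rw [hcdef]; nlinarith)]
    linarith
  have hval : psiTH μ lam a (μ ^ 2 / c * a) = a ^ 2 / c := by
    rw [psiTH, hmin, hcdef]
    field_simp
    ring
  rw [hval, psiTH]
  rcases le_or_gt (x ^ 2 / μ ^ 2) 1 with h | h
  · rw [phiTH, min_eq_right h]
    have hkey : x ^ 2 / μ ^ 2 + 1 / (2 * lam) * (x - a) ^ 2 - a ^ 2 / c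
        = c / (2 * lam * μ ^ 2) * (x - μ ^ 2 / c * a) ^ 2 := by
      rw [hcdef]; field_simp; ring
    nlinarith [mul_nonneg (div_nonneg hc0.le (by positivity : (0:ℝ) ≤ 2 * lam * μ ^ 2))
      (sq_nonneg (x - μ ^ 2 / c * a))]
  · rw [phiTH, min_eq_left h.le]
    have h3 : a ^ 2 / c < 1 := (div_lt_one hc0).2 ha2
    nlinarith [mul_nonneg (by positivity : (0:ℝ) ≤ 1 / (2 * lam)) (sq_nonneg (x - a)), h3]
end

section
/- Let μ > 0, λ > 0, a ∈ ℝ, and define ψ(x; a) = φ_μ(x) + (1/(2λ))(x − a)². If |a| > √(μ² + 2λ), then x† = a is a global minimizer of ψ(·; a), i.e., ψ(a; a) ≤ ψ(x; a) for all x ∈ ℝ. -/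
theorem stmt5 (μ lam a : ℝ) (hμ : 0 < μ) (hlam : 0 < lam)
    (ha : Real.sqrt (μ ^ 2 + 2 * lam) < |a|) :
    ∀ x : ℝ, psiTH μ lam a a ≤ psiTH μ lam a x := by
  intro x
  have h0 : (0:ℝ) ≤ μ ^ 2 + 2 * lam := by positivity
  have hsq : Real.sqrt (μ ^ 2 + 2 * lam) ^ 2 = μ ^ 2 + 2 * lam := Real.sq_sqrt h0
  have hs : μ ^ 2 + 2 * lam < a ^ 2 := by
    have h2 : Real.sqrt (μ ^ 2 + 2 * lam) ^ 2 < |a| ^ 2 :=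
      pow_lt_pow_left₀ ha (Real.sqrt_nonneg _) two_ne_zero
    rw [hsq, sq_abs] at h2
    exact h2
  have hμ2 : (0:ℝ) < μ ^ 2 := by positivity
  have hphia : phiTH μ a = 1 := by
    exact min_eq_left (by rw [le_div_iff₀ hμ2]; nlinarith)
  have hgoal : (1:ℝ) ≤ phiTH μ x + (1 / (2 * lam)) * (x - a) ^ 2 := by
    rcases le_or_gt (μ ^ 2) (x ^ 2) with h | h
    · have hx : phiTH μ x = 1 :=
        min_eq_left (by rw [le_div_iff₀ hμ2]; linarith)
      rw [hx]
      have : (0:ℝ) ≤ 1 / (2 * lam) * (x - a) ^ 2 := by positivity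
      linarith
    · have hm : phiTH μ x = x ^ 2 / μ ^ 2 := by
        exact min_eq_right (by rw [div_le_one hμ2]; linarith)
      rw [hm]
      have he : x ^ 2 / μ ^ 2 + 1 / (2 * lam) * (x - a) ^ 2
          = (2 * lam * x ^ 2 + μ ^ 2 * (x - a) ^ 2) / (2 * lam * μ ^ 2) := by
        field_simp
      rw [he, le_div_iff₀ (by positivity)]
      nlinarith [sq_nonneg (2 * lam * x + μ ^ 2 * (x - a)), mul_pos hlam hμ2,
        sq_nonneg x, sq_nonneg (x - a), mul_pos hlam hlam]
  simp only [psiTH, hphia, sub_self]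
  linarith [hgoal]
end

section
/- Let μ > 0, λ > 0, a ∈ ℝ, and define ψ(x; a) = φ_μ(x) + (1/(2λ))(x − a)². If |a| = √(μ² + 2λ), then both a and (μ²/(μ² + 2λ)) a are global minimizers of ψ(·; a), and ψ(a; a) = ψ((μ²/(μ² + 2λ)) a; a) = 1. -/
/-!
On `|x| ≥ μ` the truncated part of `ψ(·; a)` equals `1`, so `ψ ≥ 1` there, with equality at `x = a`
once `a² ≥ μ²`. On `|x| ≤ μ`, `ψ` is the quadratic `x²/μ² + (x − a)²/(2λ)`, whose minimum over `ℝ` is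
`a²/(μ² + 2λ)`, attained at the shrunken point `μ² a/(μ² + 2λ)`; this point lies in `[-μ, μ]` when
`a² = μ² + 2λ`, and the minimum value is then `1` as well.
-/

section TruncatedHuber

variable {μ lam a x : ℝ}

lemma phiTH_eq_one (hμ : μ ≠ 0) (h : μ ^ 2 ≤ x ^ 2) : phiTH μ x = 1 :=
  min_eq_left ((one_le_div (by positivity)).mpr h)

lemma phiTH_eq_sq_div (h : x ^ 2 ≤ μ ^ 2) : phiTH μ x = x ^ 2 / μ ^ 2 :=
  min_eq_right (div_le_one_of_le₀ h (sq_nonneg μ))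

lemma sq_div_add_sq_sub_div_eq (hμ : μ ≠ 0) (hlam : 0 < lam) (x : ℝ) :
    x ^ 2 / μ ^ 2 + 1 / (2 * lam) * (x - a) ^ 2 =
      a ^ 2 / (μ ^ 2 + 2 * lam) +
        (μ ^ 2 + 2 * lam) / (2 * lam * μ ^ 2) * (x - μ ^ 2 / (μ ^ 2 + 2 * lam) * a) ^ 2 := by
  have hs : μ ^ 2 + 2 * lam ≠ 0 := by positivity
  field_simp
  ring

lemma sq_div_add_sq_sub_div_ge (hμ : μ ≠ 0) (hlam : 0 < lam) (x : ℝ) :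
    a ^ 2 / (μ ^ 2 + 2 * lam) ≤ x ^ 2 / μ ^ 2 + 1 / (2 * lam) * (x - a) ^ 2 := by
  rw [sq_div_add_sq_sub_div_eq hμ hlam]
  have : 0 ≤ (μ ^ 2 + 2 * lam) / (2 * lam * μ ^ 2) := by positivity
  nlinarith [sq_nonneg (x - μ ^ 2 / (μ ^ 2 + 2 * lam) * a)]

lemma one_le_psiTH (hμ : μ ≠ 0) (hlam : 0 < lam) (ha : μ ^ 2 + 2 * lam ≤ a ^ 2) (x : ℝ) :
    1 ≤ psiTH μ lam a x := by
  rcases le_total (μ ^ 2) (x ^ 2) with hx | hx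
  · rw [psiTH, phiTH_eq_one hμ hx]
    have : 0 ≤ 1 / (2 * lam) * (x - a) ^ 2 := by positivity
    linarith
  · rw [psiTH, phiTH_eq_sq_div hx]
    calc 1 ≤ a ^ 2 / (μ ^ 2 + 2 * lam) := (one_le_div (by positivity)).mpr ha
      _ ≤ _ := sq_div_add_sq_sub_div_ge hμ hlam x

lemma psiTH_self (hμ : μ ≠ 0) (ha : μ ^ 2 ≤ a ^ 2) : psiTH μ lam a a = 1 := by
  simp [psiTH, phiTH_eq_one hμ ha]

lemma psiTH_shrink (hμ : μ ≠ 0) (hlam : 0 < lam)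
    (ha : μ ^ 2 * a ^ 2 ≤ (μ ^ 2 + 2 * lam) ^ 2) :
    psiTH μ lam a (μ ^ 2 / (μ ^ 2 + 2 * lam) * a) = a ^ 2 / (μ ^ 2 + 2 * lam) := by
  have hs : 0 < μ ^ 2 + 2 * lam := by positivity
  have hx : (μ ^ 2 / (μ ^ 2 + 2 * lam) * a) ^ 2 ≤ μ ^ 2 := by
    rw [mul_pow, div_pow, div_mul_eq_mul_div, div_le_iff₀ (by positivity), pow_two (μ ^ 2),
      mul_assoc]
    exact mul_le_mul_of_nonneg_left ha (sq_nonneg μ)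
  rw [psiTH, phiTH_eq_sq_div hx, sq_div_add_sq_sub_div_eq hμ hlam]
  simp

end TruncatedHuber

theorem stmt6 (μ lam a : ℝ) (hμ : 0 < μ) (hlam : 0 < lam)
    (ha : |a| = Real.sqrt (μ ^ 2 + 2 * lam)) :
    (∀ x : ℝ, psiTH μ lam a a ≤ psiTH μ lam a x) ∧
    (∀ x : ℝ, psiTH μ lam a ((μ ^ 2 / (μ ^ 2 + 2 * lam)) * a) ≤ psiTH μ lam a x) ∧
    psiTH μ lam a a = 1 ∧
    psiTH μ lam a ((μ ^ 2 / (μ ^ 2 + 2 * lam)) * a) = 1 := by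
  have hs : 0 < μ ^ 2 + 2 * lam := by positivity
  have ha2 : a ^ 2 = μ ^ 2 + 2 * lam := by
    rw [← sq_abs, ha, Real.sq_sqrt hs.le]
  have hlower := one_le_psiTH hμ.ne' hlam ha2.ge
  have hself : psiTH μ lam a a = 1 := psiTH_self hμ.ne' (by linarith)
  have hshrink : psiTH μ lam a (μ ^ 2 / (μ ^ 2 + 2 * lam) * a) = 1 := by
    rw [psiTH_shrink hμ.ne' hlam (by rw [ha2, sq]; nlinarith), ha2, div_self hs.ne']
  exact ⟨fun x => hself ▸ hlower x, fun x => hshrink ▸ hlower x, hself, hshrink⟩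
end

section
/- Let μ > 0, λ > 0, a ∈ ℝ, and define ψ(x; a) = φ_μ(x) + (1/(2λ))(x − a)². Then every global minimizer x† of ψ(·; a) satisfies |x†| ≠ μ. -/
lemma auxTH (μ lam a : ℝ) (hμ : 0 < μ) (hlam : 0 < lam)
    (hmin : ∀ y : ℝ, psiTH μ lam a μ ≤ psiTH μ lam a y) : False := by
  have hμ2 : (0:ℝ) < μ ^ 2 := by positivity
  have e1 : phiTH μ μ = 1 := by
    simp [phiTH, div_self (ne_of_gt hμ2)]
  -- Step 1: a ≤ μ
  have ha : a ≤ μ := by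
    by_contra h
    push_neg at h
    have h1 := hmin a
    have e2 : phiTH μ a = 1 := by
      rw [phiTH, min_eq_left]
      rw [one_le_div hμ2]
      nlinarith
    rw [psiTH, psiTH, e1, e2] at h1
    have hc : (0:ℝ) < 1 / (2 * lam) := by positivity
    have hpos : 0 < (μ - a) ^ 2 := by nlinarith
    nlinarith [mul_pos hc hpos]
  -- Step 2: choose ε = min μ (lam/μ)
  set ε := min μ (lam / μ) with hε
  have hε0 : 0 < ε := lt_min hμ (by positivity)
  have hε1 : ε ≤ μ := min_le_left _ _
  have hε2' : ε * μ ≤ lam := by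
    have := min_le_right μ (lam / μ)
    rw [← le_div_iff₀ hμ]; exact this
  have h2 := hmin (μ - ε)
  have e3 : phiTH μ (μ - ε) = (μ - ε) ^ 2 / μ ^ 2 := by
    rw [phiTH, min_eq_right]
    rw [div_le_one hμ2]
    nlinarith
  rw [psiTH, psiTH, e1, e3] at h2
  have h3 := mul_le_mul_of_nonneg_right h2 (show (0:ℝ) ≤ 2 * lam * μ ^ 2 by positivity)
  have l : (1 + 1 / (2 * lam) * (μ - a) ^ 2) * (2 * lam * μ ^ 2)
      = 2 * lam * μ ^ 2 + μ ^ 2 * (μ - a) ^ 2 := by field_simp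
  have r : ((μ - ε) ^ 2 / μ ^ 2 + 1 / (2 * lam) * (μ - ε - a) ^ 2) * (2 * lam * μ ^ 2)
      = 2 * lam * (μ - ε) ^ 2 + μ ^ 2 * (μ - ε - a) ^ 2 := by field_simp
  rw [l, r] at h3
  nlinarith [mul_pos (mul_pos hlam hε0) hμ,
    mul_nonneg (mul_nonneg (sq_nonneg μ) hε0.le) (sub_nonneg.mpr ha),
    mul_nonneg (mul_nonneg hlam.le hε0.le) (sub_nonneg.mpr hε1),
    mul_le_mul_of_nonneg_left hε2' (mul_nonneg hε0.le hμ.le)]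

theorem stmt7 (μ lam a : ℝ) (hμ : 0 < μ) (hlam : 0 < lam) (x : ℝ)
    (hmin : ∀ y : ℝ, psiTH μ lam a x ≤ psiTH μ lam a y) :
    |x| ≠ μ := by
  intro habs
  rcases (abs_eq hμ.le).mp habs with hx | hx
  · rw [hx] at hmin
    exact auxTH μ lam a hμ hlam hmin
  · rw [hx] at hmin
    apply auxTH μ lam (-a) hμ hlam
    intro y
    have eq : ∀ z : ℝ, psiTH μ lam (-a) (-z) = psiTH μ lam a z := by
      intro z
      unfold psiTH phiTH
      ring_nf
    have e1 : psiTH μ lam (-a) μ = psiTH μ lam a (-μ) := by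
      rw [← eq (-μ)]; ring_nf
    have e2 : psiTH μ lam (-a) y = psiTH μ lam a (-y) := by
      rw [← eq (-y)]; ring_nf
    rw [e1, e2]; exact hmin (-y)
end

section
/- Let A be a real m × n matrix, b ∈ ℝ^m, and μ > 0. Let x̂ ∈ ℝⁿ satisfy A x̂ = b and μ < |x̂_i| for every index i with x̂_i ≠ 0. Then there exists ρ > 0 such that for every v ∈ ℝⁿ with A v = 0 and ‖v‖_∞ < ρ, one has Φ_μ(x̂ + v) ≥ Φ_μ(x̂). -/
/-- Truncated Huber penalty: Φ_μ(x) = Σ_i φ_μ(x_i). -/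
noncomputable def PhiTH {n : ℕ} (μ : ℝ) (x : Fin n → ℝ) : ℝ := ∑ i, phiTH μ (x i)

/-- Note: the norm `‖v‖` on `Fin n → ℝ` is the sup norm `‖v‖_∞ = max_i |v_i|`. -/
theorem stmt8 {m n : ℕ} (A : Matrix (Fin m) (Fin n) ℝ) (b : Fin m → ℝ)
    (μ : ℝ) (hμ : 0 < μ) (xh : Fin n → ℝ) (hfeas : A.mulVec xh = b)
    (hbig : ∀ i, xh i ≠ 0 → μ < |xh i|) :
    ∃ ρ > 0, ∀ v : Fin n → ℝ, A.mulVec v = 0 → ‖v‖ < ρ →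
      PhiTH μ xh ≤ PhiTH μ (xh + v) := by
  -- choose ρ with 0 < ρ and ρ ≤ |xh i| - μ for all nonzero coordinates
  obtain ⟨ρ, hρ0, hρ⟩ : ∃ ρ > 0, ∀ i, xh i ≠ 0 → ρ ≤ |xh i| - μ := by
    classical
    set s := Finset.univ.filter (fun i => xh i ≠ 0) with hs
    by_cases hne : s.Nonempty
    · refine ⟨s.inf' hne (fun i => |xh i| - μ), ?_, ?_⟩
      · rw [gt_iff_lt, Finset.lt_inf'_iff]
        intro i hi
        have := hbig i (by simpa [hs] using hi)
        linarith
      · intro i hi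
        exact Finset.inf'_le _ (by simp [hs, hi])
    · refine ⟨1, one_pos, fun i hi => absurd ⟨i, by simp [hs, hi]⟩ hne⟩
  refine ⟨ρ, hρ0, fun v _ hv => ?_⟩
  unfold PhiTH
  apply Finset.sum_le_sum
  intro i _
  by_cases h0 : xh i = 0
  · have : phiTH μ (xh i) = 0 := by simp [phiTH, h0, min_eq_right, le_refl]
    rw [this]
    exact le_min (by norm_num) (div_nonneg (sq_nonneg _) (sq_nonneg _)) |>.trans_eq rfl
  · have hvi : |v i| < ρ := by
      have := norm_le_pi_norm v i
      simp only [Real.norm_eq_abs] at this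
      linarith
    have habs : μ < |xh i + v i| := by
      have h1 := hρ i h0
      have h2 : |xh i| - |v i| ≤ |xh i + v i| := by
        have := abs_sub_abs_le_abs_sub (xh i) (-(v i))
        simpa [sub_neg_eq_add, abs_neg] using this
      linarith
    have h1 : 1 ≤ (xh i + v i) ^ 2 / μ ^ 2 := by
      rw [le_div_iff₀ (by positivity)]
      have : μ ^ 2 < |xh i + v i| ^ 2 := by
        apply pow_lt_pow_left₀ habs (le_of_lt hμ) (by norm_num) |>.trans_le
        exact le_of_eq rfl
      calc 1 * μ ^ 2 = μ ^ 2 := one_mul _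
        _ ≤ |xh i + v i| ^ 2 := this.le
        _ = (xh i + v i) ^ 2 := sq_abs _
    have : phiTH μ (xh i + v i) = 1 := min_eq_left h1
    simp only [Pi.add_apply] at this ⊢
    rw [this]
    exact min_le_left _ _
end

section
/- Let A be a real m × n matrix, b ∈ ℝ^m, ε > 0, and μ > 0. Let x̂ ∈ ℝⁿ satisfy ‖A x̂ − b‖₂² ≤ ε² and μ < |x̂_i| for every index i with x̂_i ≠ 0. Then there exists ρ > 0 such that for every v ∈ ℝⁿ with ‖v‖_∞ < min(ρ, ε/(√n · ‖A‖₂)) and ‖A(x̂ + v) − b‖₂² ≤ ε², one has Φ_μ(x̂ + v) ≥ Φ_μ(x̂). -/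
/-- Euclidean norm of a vector. -/
noncomputable def norm2 {m : ℕ} (u : Fin m → ℝ) : ℝ := Real.sqrt (∑ i, (u i) ^ 2)

/-- Operator (spectral) norm ‖A‖₂ of a matrix, as an operator between Euclidean spaces. -/
noncomputable def opNorm2 {m n : ℕ} (A : Matrix (Fin m) (Fin n) ℝ) : ℝ :=
  ‖LinearMap.toContinuousLinearMap (Matrix.toEuclideanLin A)‖

/-- Note: the norm `‖v‖` on `Fin n → ℝ` is the sup norm `‖v‖_∞ = max_i |v_i|`. -/
theorem stmt9 {m n : ℕ} (A : Matrix (Fin m) (Fin n) ℝ) (b : Fin m → ℝ)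
    (ε μ : ℝ) (hε : 0 < ε) (hμ : 0 < μ) (xh : Fin n → ℝ)
    (hfeas : norm2 (A.mulVec xh - b) ^ 2 ≤ ε ^ 2)
    (hbig : ∀ i, xh i ≠ 0 → μ < |xh i|) :
    ∃ ρ > 0, ∀ v : Fin n → ℝ,
      ‖v‖ < min ρ (ε / (Real.sqrt n * opNorm2 A)) →
      norm2 (A.mulVec (xh + v) - b) ^ 2 ≤ ε ^ 2 →
      PhiTH μ xh ≤ PhiTH μ (xh + v) := by
  set c : Fin n → ℝ := fun i => if xh i = 0 then 1 else |xh i| - μ with hc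
  have hcpos : ∀ i, 0 < c i := by
    intro i
    by_cases h : xh i = 0 <;> simp [hc, h]
    · linarith [hbig i h]
  set s : Finset ℝ := insert (1:ℝ) (Finset.image c Finset.univ) with hs
  have hsne : s.Nonempty := ⟨1, Finset.mem_insert_self _ _⟩
  refine ⟨s.min' hsne, ?_, ?_⟩
  · apply lt_of_lt_of_le (b := (s.min' hsne))
    · have hall : ∀ x ∈ s, (0:ℝ) < x := by
        intro x hx
        rcases Finset.mem_insert.mp hx with h | h
        · rw [h]; exact one_pos
        · obtain ⟨i, _, hi⟩ := Finset.mem_image.mp h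
          rw [← hi]; exact hcpos i
      exact hall _ (s.min'_mem hsne)
    · rfl
  · intro v hv _
    have hvρ : ‖v‖ < s.min' hsne := lt_of_lt_of_le hv (min_le_left _ _)
    unfold PhiTH
    apply Finset.sum_le_sum
    intro i _
    have hvi : |v i| < c i := by
      have h1 : |v i| ≤ ‖v‖ := by
        have := norm_le_pi_norm v i
        simpa using this
      have h2 : s.min' hsne ≤ c i := by
        apply Finset.min'_le
        exact Finset.mem_insert_of_mem (Finset.mem_image_of_mem c (Finset.mem_univ i))
      linarith
    by_cases h : xh i = 0
    · have : phiTH μ (xh i) = 0 := by simp [phiTH, h]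
      rw [Pi.add_apply, this]
      unfold phiTH
      exact le_min (by norm_num) (div_nonneg (sq_nonneg _) (sq_nonneg _))
    · have hμlt : μ < |xh i| := hbig i h
      have hci : c i = |xh i| - μ := by simp [hc, h]
      have habs : μ < |xh i + v i| := by
        have := abs_sub_abs_le_abs_sub (xh i) (-(v i))
        rw [sub_neg_eq_add] at this
        rw [hci] at hvi
        have : |xh i| - |v i| ≤ |xh i + v i| := by
          simpa [abs_neg] using this
        linarith
      have hone : ∀ t : ℝ, μ < |t| → phiTH μ t = 1 := by
        intro t ht
        unfold phiTH
        rw [min_eq_left]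
        rw [le_div_iff₀ (by positivity), one_mul]
        have : μ ^ 2 < |t| ^ 2 := by
          apply pow_lt_pow_left₀ ht (le_of_lt hμ)
          norm_num
        rw [sq_abs] at this
        linarith
      rw [Pi.add_apply, hone _ hμlt, hone _ habs]
end

section
/- Let A be a real m × n matrix with m < n such that every submatrix of A obtained by deleting one column has rank m, let b ∈ ℝ^m, and let μ > 0. If x̂ ∈ ℝⁿ is a local minimizer of Φ_μ over the feasible set {x ∈ ℝⁿ : A x = b}, then |x̂_i| ≠ μ for all i = 1, …, n. -/
open Finset in
lemma exists_ker_vec {m n : ℕ} (A : Matrix (Fin m) (Fin n) ℝ) (i : Fin n)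
    (hA : (A.submatrix id ((↑) : {k : Fin n // k ≠ i} → Fin n)).rank = m) :
    ∃ v : Fin n → ℝ, A.mulVec v = 0 ∧ v i = 1 := by
  classical
  set B := A.submatrix id ((↑) : {k : Fin n // k ≠ i} → Fin n) with hB
  have hrange : LinearMap.range B.mulVecLin = ⊤ := by
    apply Submodule.eq_top_of_finrank_eq
    rw [← Matrix.rank, hA, Module.finrank_fintype_fun_eq_card, Fintype.card_fin]
  obtain ⟨c, hc⟩ : ∃ c, B.mulVec c = fun r => A r i := by
    have := hrange ▸ Submodule.mem_top (x := fun r => A r i) (R := ℝ)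
    obtain ⟨c, hc⟩ := this
    exact ⟨c, hc⟩
  refine ⟨fun j => if h : j = i then 1 else -(c ⟨j, h⟩), ?_, by simp⟩
  funext r
  have hcr := congrFun hc r
  simp only [Matrix.mulVec, dotProduct, hB, Matrix.submatrix_apply, id_eq] at hcr ⊢
  have hsub := Finset.sum_subtype (univ.erase i) (p := fun k => k ≠ i) (F := inferInstance)
      (fun x => by simp) (fun j => A r j * (if h : j = i then 0 else c ⟨j, h⟩))
  have hsum : (∑ k : {k : Fin n // k ≠ i}, A r k * c k)
      = ∑ j ∈ univ.erase i, A r j * (if h : j = i then 0 else c ⟨j, h⟩) := by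
    rw [hsub]
    apply Finset.sum_congr rfl
    intro k _
    simp [k.2]
  rw [hsum] at hcr
  rw [← Finset.sum_erase_add _ _ (Finset.mem_univ i)]
  simp only [dif_pos rfl, mul_one]
  have : ∑ j ∈ univ.erase i, A r j * (if h : j = i then (1:ℝ) else -(c ⟨j, h⟩)) =
      -∑ j ∈ univ.erase i, A r j * (if h : j = i then 0 else c ⟨j, h⟩) := by
    rw [← Finset.sum_neg_distrib]
    apply Finset.sum_congr rfl
    intro j hj
    rw [Finset.mem_erase] at hj
    simp [hj.1]
  rw [this, hcr]
  simp

lemma phiTH_le_one (μ t : ℝ) : phiTH μ t ≤ 1 := min_le_left _ _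

lemma phiTH_upper {μ : ℝ} (hμ : 0 < μ) (a w t : ℝ) :
    phiTH μ (a + t * w) ≤ phiTH μ a
      + (if a ^ 2 < μ ^ 2 then 2 * a * w / μ ^ 2 else 0) * t + w ^ 2 * t ^ 2 / μ ^ 2 := by
  have hμ2 : (0:ℝ) < μ ^ 2 := by positivity
  by_cases h : a ^ 2 < μ ^ 2
  · rw [if_pos h]
    have h1 : phiTH μ a = a ^ 2 / μ ^ 2 :=
      min_eq_right (le_of_lt ((div_lt_one hμ2).mpr h))
    have h2 : phiTH μ (a + t * w) ≤ (a + t * w) ^ 2 / μ ^ 2 := min_le_right _ _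
    rw [h1]
    refine h2.trans (le_of_eq ?_)
    field_simp
    ring
  · rw [if_neg h]
    have h1 : phiTH μ a = 1 := min_eq_left ((one_le_div hμ2).mpr (not_lt.mp h))
    have h2 : phiTH μ (a + t * w) ≤ 1 := min_le_left _ _
    have h3 : 0 ≤ w ^ 2 * t ^ 2 / μ ^ 2 := by positivity
    rw [h1]
    linarith

lemma norm2_smul {m : ℕ} (t : ℝ) (v : Fin m → ℝ) : norm2 (t • v) = |t| * norm2 v := by
  unfold norm2
  have h : ∑ i, ((t • v) i) ^ 2 = t ^ 2 * ∑ i, (v i) ^ 2 := by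
    rw [Finset.mul_sum]
    apply Finset.sum_congr rfl
    intro j _
    simp [mul_pow]
  rw [h, Real.sqrt_mul (sq_nonneg t), Real.sqrt_sq_eq_abs]

open Finset in
set_option maxHeartbeats 1000000 in
theorem stmt11 {m n : ℕ} (hmn : m < n) (A : Matrix (Fin m) (Fin n) ℝ)
    (hA : ∀ j : Fin n,
      (A.submatrix id ((↑) : {k : Fin n // k ≠ j} → Fin n)).rank = m)
    (b : Fin m → ℝ) (μ : ℝ) (hμ : 0 < μ) (xh : Fin n → ℝ)
    (hfeas : A.mulVec xh = b)
    (hloc : ∃ δ > 0, ∀ x : Fin n → ℝ, A.mulVec x = b → norm2 (x - xh) < δ →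
      PhiTH μ xh ≤ PhiTH μ x) :
    ∀ i, |xh i| ≠ μ := by
  classical
  intro i habs
  obtain ⟨δ, hδ, hloc⟩ := hloc
  obtain ⟨v0, hv0, hv0i⟩ := exists_ker_vec A i (hA i)
  have hμ2 : (0:ℝ) < μ ^ 2 := by positivity
  have hxi2 : (xh i) ^ 2 = μ ^ 2 := by rw [← sq_abs, habs]
  set v : Fin n → ℝ := (-(xh i) / μ) • v0 with hv
  have hvker : A.mulVec v = 0 := by
    rw [hv, Matrix.mulVec_smul, hv0]
    simp
  have hvi : v i = -(xh i) / μ := by simp [hv, hv0i]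
  set L : Fin n → ℝ := fun j => if (xh j) ^ 2 < μ ^ 2 then 2 * xh j * v j / μ ^ 2 else 0 with hL
  set S : ℝ := ∑ j ∈ univ.erase i, L j with hS
  set K : ℝ := ∑ j ∈ univ.erase i, (v j) ^ 2 / μ ^ 2 with hK
  have hK0 : 0 ≤ K := Finset.sum_nonneg fun j _ => by positivity
  have hphixi : phiTH μ (xh i) = 1 := by
    unfold phiTH
    rw [hxi2, div_self (ne_of_gt hμ2), min_self]
  have key : ∀ t : ℝ, ∑ j ∈ univ.erase i, phiTH μ (xh j + t * v j)
      ≤ (∑ j ∈ univ.erase i, phiTH μ (xh j)) + S * t + K * t ^ 2 := by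
    intro t
    have hle := Finset.sum_le_sum (s := univ.erase i)
      (f := fun j => phiTH μ (xh j + t * v j))
      (g := fun j => phiTH μ (xh j) + L j * t + (v j) ^ 2 * t ^ 2 / μ ^ 2)
      (fun j _ => phiTH_upper hμ (xh j) (v j) t)
    refine hle.trans (le_of_eq ?_)
    have e1 : ∑ j ∈ univ.erase i, L j * t = S * t := by rw [hS, Finset.sum_mul]
    have e2 : ∑ j ∈ univ.erase i, (v j) ^ 2 * t ^ 2 / μ ^ 2 = K * t ^ 2 := by
      rw [hK, Finset.sum_mul]
      apply Finset.sum_congr rfl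
      intro j _
      ring
    rw [Finset.sum_add_distrib, Finset.sum_add_distrib, e1, e2]
  have hPhixh : PhiTH μ xh = (∑ j ∈ univ.erase i, phiTH μ (xh j)) + 1 := by
    unfold PhiTH
    rw [← Finset.sum_erase_add _ _ (Finset.mem_univ i), hphixi]
  have hsplit : ∀ t : ℝ, PhiTH μ (xh + t • v)
      = (∑ j ∈ univ.erase i, phiTH μ (xh j + t * v j)) + phiTH μ (xh i + t * v i) := by
    intro t
    unfold PhiTH
    rw [← Finset.sum_erase_add _ _ (Finset.mem_univ i)]
    simp [Pi.add_apply, Pi.smul_apply, smul_eq_mul, mul_comm]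
  have hcoordpos : ∀ t : ℝ, 0 < t → t ≤ μ →
      phiTH μ (xh i + t * v i) = (1 - t / μ) ^ 2 := by
    intro t ht htμ
    have hval : xh i + t * v i = xh i * (1 - t / μ) := by
      rw [hvi]; field_simp; ring
    have hfrac : 0 ≤ 1 - t / μ := by
      rw [sub_nonneg, div_le_one hμ]; exact htμ
    have hsq : (xh i + t * v i) ^ 2 / μ ^ 2 = (1 - t / μ) ^ 2 := by
      rw [hval, mul_pow, hxi2]
      field_simp
    have hlt1 : (1 - t / μ) ^ 2 ≤ 1 := by
      have : 0 < t / μ := div_pos ht hμ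
      nlinarith
    unfold phiTH
    rw [hsq, min_eq_right hlt1]
  have hfeas' : ∀ t : ℝ, A.mulVec (xh + t • v) = b := by
    intro t
    rw [Matrix.mulVec_add, Matrix.mulVec_smul, hvker, hfeas]
    simp
  have hdist : ∀ t : ℝ, (xh + t • v) - xh = t • v := by
    intro t; funext j; simp
  set N : ℝ := norm2 v + 1 with hN
  have hN0 : 0 < N := by
    have : 0 ≤ norm2 v := Real.sqrt_nonneg _
    rw [hN]; linarith
  have hnormbound : ∀ t : ℝ, 0 < t → t ≤ δ / (2 * N) → t * norm2 v < δ := by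
    intro t ht htδ
    have h1 : t * norm2 v ≤ t * N := by
      apply mul_le_mul_of_nonneg_left _ (le_of_lt ht)
      rw [hN]; linarith
    have h2 : t * N ≤ (δ / (2 * N)) * N := mul_le_mul_of_nonneg_right htδ (le_of_lt hN0)
    have h3 : (δ / (2 * N)) * N = δ / 2 := by
      field_simp
    linarith
  clear_value v L S K N
  clear hv hL hS hK hN
  by_cases hScase : S ≤ 0
  · -- move in direction +v
    have hpos1 : 0 < 1 / μ ^ 2 + K := by positivity
    set t : ℝ := min (min μ (δ / (2 * N))) (1 / (μ * (1 / μ ^ 2 + K))) with ht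
    have htpos : 0 < t := lt_min (lt_min hμ (by positivity)) (by positivity)
    have htμ : t ≤ μ := le_trans (min_le_left _ _) (min_le_left _ _)
    have htδ : t ≤ δ / (2 * N) := le_trans (min_le_left _ _) (min_le_right _ _)
    have htK : t ≤ 1 / (μ * (1 / μ ^ 2 + K)) := min_le_right _ _
    clear_value t
    have hxt := hloc (xh + t • v) (hfeas' t) ?_
    · have h1 := key t
      have h2 := hcoordpos t htpos htμ
      have h3 := hsplit t
      have hmain : t * (1 / μ ^ 2 + K) ≤ 1 / μ := by
        have hmul := mul_le_mul_of_nonneg_right htK (le_of_lt hpos1)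
        have he : 1 / (μ * (1 / μ ^ 2 + K)) * (1 / μ ^ 2 + K) = 1 / μ := by
          field_simp
        rw [he] at hmul
        exact hmul
      have hm2 := mul_le_mul_of_nonneg_left hmain (le_of_lt htpos)
      have h4 : (t / μ) ^ 2 + K * t ^ 2 ≤ t / μ := by
        have e : t * (t * (1 / μ ^ 2 + K)) = (t / μ) ^ 2 + K * t ^ 2 := by
          field_simp
        have e2 : t * (1 / μ) = t / μ := by ring
        rw [e, e2] at hm2
        exact hm2
      have hSt : S * t ≤ 0 := mul_nonpos_of_nonpos_of_nonneg hScase (le_of_lt htpos)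
      have hq : 0 < t / μ := div_pos htpos hμ
      have hstrict : PhiTH μ (xh + t • v) < PhiTH μ xh := by
        rw [h3, h2, hPhixh]
        nlinarith [h1, h4, hSt, hq]
      linarith
    · rw [hdist, norm2_smul, abs_of_pos htpos]
      exact hnormbound t htpos htδ
  · push_neg at hScase
    set t : ℝ := min (δ / (2 * N)) (S / (2 * (K + 1))) with ht
    have htpos : 0 < t := lt_min (by positivity) (by positivity)
    have htδ : t ≤ δ / (2 * N) := min_le_left _ _
    have htK : t ≤ S / (2 * (K + 1)) := min_le_right _ _
    clear_value t
    have hxt := hloc (xh + (-t) • v) (hfeas' (-t)) ?_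
    · have h1 := key (-t)
      have h3 := hsplit (-t)
      have hci : phiTH μ (xh i + (-t) * v i) ≤ 1 := phiTH_le_one _ _
      have hKt : K * t < S / 2 := by
        have hd : t * (2 * (K + 1)) ≤ S :=
          (le_div_iff₀ (show (0:ℝ) < 2 * (K + 1) by positivity)).mp htK
        linarith [hd, htpos]
      have hstrict : PhiTH μ (xh + (-t) • v) < PhiTH μ xh := by
        rw [h3, hPhixh]
        have h7 : K * t * t < (S / 2) * t := mul_lt_mul_of_pos_right hKt htpos
        have h8 : 0 < S * t := mul_pos hScase htpos
        linarith [h1, hci, h7, h8]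
      linarith
    · rw [hdist, norm2_smul, abs_neg, abs_of_pos htpos]
      exact hnormbound t htpos htδ
end

section
/- Let A be a real m × n matrix with m < n such that every submatrix of A obtained by deleting one column has rank m, let b ∈ ℝ^m, and let μ > 0. If x̂ ∈ ℝⁿ is a local minimizer of Φ_μ over the feasible set {x ∈ ℝⁿ : A x = b}, then |x̂_i| ≠ μ for all i = 1, …, n, and there exists ŷ ∈ ℝ^m such that (2/μ²)(𝟏 − H_μ(x̂)) ∘ x̂ + Aᵀ ŷ = 0 and A x̂ = b. -/
/-- Filter operator H_μ: (H_μ(x))_i = 0 if |x_i| ≤ μ, and 1 if |x_i| > μ. -/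
noncomputable def Hfilter {n : ℕ} (μ : ℝ) (x : Fin n → ℝ) : Fin n → ℝ :=
  fun i => if μ < |x i| then 1 else 0

/-- Per-component linear coefficient of the directional upper bound. -/
noncomputable def qdef {n : ℕ} (μ : ℝ) (xh v : Fin n → ℝ) (i : Fin n) : ℝ :=
  if |xh i| < μ then 2 * xh i * v i / μ ^ 2
  else if |xh i| = μ then min 0 (2 * xh i * v i / μ ^ 2) else 0

lemma per_i {μ : ℝ} (hμ : 0 < μ) {n : ℕ} (xh v : Fin n → ℝ) (i : Fin n)
    {t : ℝ} (ht : 0 ≤ t) :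
    phiTH μ (xh i + t * v i) ≤
      phiTH μ (xh i) + qdef μ xh v i * t + (v i ^ 2 / μ ^ 2) * t ^ 2 := by
  have hμ2 : (0:ℝ) < μ ^ 2 := by positivity
  set a := xh i with ha
  set w := v i with hw
  have hexp : (a + t * w) ^ 2 / μ ^ 2
      = a ^ 2 / μ ^ 2 + (2 * a * w / μ ^ 2) * t + (w ^ 2 / μ ^ 2) * t ^ 2 := by
    field_simp; ring
  have hub : phiTH μ (a + t * w) ≤ (a + t * w) ^ 2 / μ ^ 2 := min_le_right _ _
  have hub1 : phiTH μ (a + t * w) ≤ 1 := min_le_left _ _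
  have hq : (0:ℝ) ≤ (w ^ 2 / μ ^ 2) * t ^ 2 := by positivity
  unfold qdef
  rw [← ha, ← hw]
  by_cases h1 : |a| < μ
  · rw [if_pos h1]
    have h2 : a ^ 2 ≤ μ ^ 2 := by
      rw [← sq_abs]
      exact pow_le_pow_left₀ (abs_nonneg a) h1.le 2
    have heq : phiTH μ a = a ^ 2 / μ ^ 2 :=
      min_eq_right ((div_le_one hμ2).mpr h2)
    rw [heq]
    calc phiTH μ (a + t * w) ≤ (a + t * w) ^ 2 / μ ^ 2 := hub
      _ = _ := hexp
  · rw [if_neg h1]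
    by_cases h2 : |a| = μ
    · rw [if_pos h2]
      have ha2 : a ^ 2 = μ ^ 2 := by rw [← sq_abs, h2]
      have heq : phiTH μ a = 1 := by
        unfold phiTH
        rw [ha2, div_self (ne_of_gt hμ2), min_self]
      rw [heq]
      rcases le_or_gt 0 (2 * a * w / μ ^ 2) with hc | hc
      · rw [min_eq_left hc]
        linarith
      · rw [min_eq_right hc.le]
        calc phiTH μ (a + t * w) ≤ (a + t * w) ^ 2 / μ ^ 2 := hub
          _ = a ^ 2 / μ ^ 2 + (2 * a * w / μ ^ 2) * t + (w ^ 2 / μ ^ 2) * t ^ 2 := hexp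
          _ = 1 + (2 * a * w / μ ^ 2) * t + (w ^ 2 / μ ^ 2) * t ^ 2 := by
            rw [ha2, div_self (ne_of_gt hμ2)]
    · rw [if_neg h2]
      have h3 : μ ≤ |a| := not_lt.mp h1
      have ha2 : μ ^ 2 ≤ a ^ 2 := by
        calc μ ^ 2 ≤ |a| ^ 2 := pow_le_pow_left₀ hμ.le h3 2
          _ = a ^ 2 := sq_abs a
      have heq : phiTH μ a = 1 := min_eq_left ((one_le_div hμ2).mpr ha2)
      rw [heq]
      linarith

/-- If a*t + C*t² ≥ 0 for all small positive t, then a ≥ 0. -/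
lemma coeff_nonneg {a C ε : ℝ} (hC : 0 ≤ C) (hε : 0 < ε)
    (h : ∀ t : ℝ, 0 < t → t < ε → 0 ≤ a * t + C * t ^ 2) : 0 ≤ a := by
  by_contra hneg
  push_neg at hneg
  set t := min (ε / 2) ((-a) / (2 * C + 1)) with htdef
  have ht0 : 0 < t := by
    apply lt_min (by linarith)
    apply div_pos (by linarith) (by linarith)
  have htε : t < ε := lt_of_le_of_lt (min_le_left _ _) (by linarith)
  have ht1 : t ≤ (-a) / (2 * C + 1) := min_le_right _ _
  have ht2 : (2 * C + 1) * t ≤ -a := by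
    rw [mul_comm]
    exact (le_div_iff₀ (by linarith)).mp ht1
  have := h t ht0 htε
  nlinarith [mul_pos ht0 ht0]

/-- Directional inequality: local minimality along direction v gives
nonnegativity of the linear coefficient sum. -/
lemma dirDeriv {n : ℕ} {μ : ℝ} (hμ : 0 < μ) (xh v : Fin n → ℝ) {δ : ℝ} (hδ : 0 < δ)
    (h : ∀ t : ℝ, 0 < t → t < δ → PhiTH μ xh ≤ PhiTH μ (fun i => xh i + t * v i)) :
    0 ≤ ∑ i, qdef μ xh v i := by
  set C : ℝ := ∑ i, v i ^ 2 / μ ^ 2 with hC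
  have hCnn : 0 ≤ C := Finset.sum_nonneg (fun i _ => by positivity)
  apply coeff_nonneg hCnn hδ
  intro t ht0 htδ
  have key : PhiTH μ (fun i => xh i + t * v i)
      ≤ PhiTH μ xh + (∑ i, qdef μ xh v i) * t + C * t ^ 2 := by
    unfold PhiTH
    rw [Finset.sum_mul, Finset.sum_mul, ← Finset.sum_add_distrib, ← Finset.sum_add_distrib]
    exact Finset.sum_le_sum (fun i _ => per_i hμ xh v i ht0.le)
  have := h t ht0 htδ
  linarith

/-- Splitting a sum over `Fin n` at one index. -/
lemma sum_split {n : ℕ} (j : Fin n) (g : Fin n → ℝ) :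
    ∑ k, g k = g j + ∑ s : {k : Fin n // k ≠ j}, g s.val := by
  rw [← Finset.add_sum_erase _ g (Finset.mem_univ j)]
  congr 1
  rw [Finset.sum_subtype (p := fun k => k ≠ j) (Finset.univ.erase j)
    (fun x => by simp [Finset.mem_erase]) g]

/-- Surjectivity of mulVec for a full-row-rank matrix. -/
lemma surj_of_rank {m : ℕ} {ι : Type*} [Fintype ι] (M : Matrix (Fin m) ι ℝ)
    (h : M.rank = m) : Function.Surjective M.mulVecLin := by
  rw [← LinearMap.range_eq_top]
  apply Submodule.eq_top_of_finrank_eq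
  rw [Matrix.rank] at h
  rw [h, Module.finrank_fintype_fun_eq_card, Fintype.card_fin]

/-- For each column j there is a kernel vector with j-th entry -1. -/
lemma exists_ker {m n : ℕ} (A : Matrix (Fin m) (Fin n) ℝ)
    (hA : ∀ j : Fin n,
      (A.submatrix id ((↑) : {k : Fin n // k ≠ j} → Fin n)).rank = m) (j : Fin n) :
    ∃ v : Fin n → ℝ, A.mulVec v = 0 ∧ v j = -1 := by
  obtain ⟨u, hu⟩ := surj_of_rank _ (hA j) (fun i => A i j)
  refine ⟨fun k => if h : k = j then -1 else u ⟨k, h⟩, ?_, by simp⟩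
  funext i
  have hui := congrFun hu i
  simp only [Matrix.mulVecLin_apply] at hui
  unfold Matrix.mulVec dotProduct at hui ⊢
  simp only [Matrix.submatrix_apply, id_eq] at hui
  rw [sum_split j]
  have hcong : ∀ s : {k : Fin n // k ≠ j},
      A i s.val * (if h : s.val = j then (-1:ℝ) else u ⟨s.val, h⟩) = A i s.val * u s := by
    intro s
    rw [dif_neg s.prop]
  rw [Finset.sum_congr rfl (fun s _ => hcong s), hui]
  simp

theorem stmt13 {m n : ℕ} (hmn : m < n) (A : Matrix (Fin m) (Fin n) ℝ)
    (hA : ∀ j : Fin n,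
      (A.submatrix id ((↑) : {k : Fin n // k ≠ j} → Fin n)).rank = m)
    (b : Fin m → ℝ) (μ : ℝ) (hμ : 0 < μ) (xh : Fin n → ℝ)
    (hfeas : A.mulVec xh = b)
    (hloc : ∃ δ > 0, ∀ x : Fin n → ℝ, A.mulVec x = b → norm2 (x - xh) < δ →
      PhiTH μ xh ≤ PhiTH μ x) :
    (∀ i, |xh i| ≠ μ) ∧
    ∃ yh : Fin m → ℝ,
      (fun i => (2 / μ ^ 2) * (1 - Hfilter μ xh i) * xh i) + A.transpose.mulVec yh = 0 ∧
      A.mulVec xh = b := by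
  obtain ⟨δ, hδ, hmin⟩ := hloc
  have hμ2 : (0:ℝ) < μ ^ 2 := by positivity
  -- the main directional inequality for kernel directions
  have hdd : ∀ v : Fin n → ℝ, A.mulVec v = 0 → 0 ≤ ∑ i, qdef μ xh v i := by
    intro v hv
    set N : ℝ := norm2 v with hN
    have hNnn : 0 ≤ N := Real.sqrt_nonneg _
    have hε : 0 < δ / (N + 1) := by positivity
    apply dirDeriv hμ xh v hε
    intro t ht0 htδ
    apply hmin
    · have hx : (fun i => xh i + t * v i) = xh + t • v := by
        funext i; simp [mul_comm]
      rw [hx, Matrix.mulVec_add, Matrix.mulVec_smul, hv, hfeas]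
      simp
    · have hsub : (fun i => xh i + t * v i) - xh = fun i => t * v i := by
        funext i; simp
      rw [hsub]
      have hnorm : norm2 (fun i => t * v i) = t * N := by
        rw [hN]; unfold norm2
        rw [show (∑ i, (t * v i) ^ 2) = t ^ 2 * ∑ i, v i ^ 2 by
          rw [Finset.mul_sum]; exact Finset.sum_congr rfl (fun i _ => by ring)]
        rw [Real.sqrt_mul (sq_nonneg t), Real.sqrt_sq ht0.le]
      rw [hnorm]
      calc t * N ≤ t * (N + 1) := by nlinarith
        _ < δ := (lt_div_iff₀ (by linarith)).mp htδ
  -- no kinks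
  have hnk : ∀ i, |xh i| ≠ μ := by
    intro j hj
    obtain ⟨v, hv0, hvj⟩ := exists_ker A hA j
    have h1 := hdd v hv0
    have h2 := hdd (-v) (by rw [Matrix.mulVec_neg, hv0, neg_zero])
    have hterm : ∀ i, qdef μ xh v i + qdef μ xh (-v) i ≤ 0 := by
      intro i
      unfold qdef
      simp only [Pi.neg_apply]
      by_cases hc1 : |xh i| < μ
      · simp only [if_pos hc1]
        have : 2 * xh i * (-v i) / μ ^ 2 = -(2 * xh i * v i / μ ^ 2) := by ring
        rw [this]; linarith
      · by_cases hc2 : |xh i| = μ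
        · simp only [if_neg hc1, if_pos hc2]
          have m1 : min 0 (2 * xh i * v i / μ ^ 2) ≤ 0 := min_le_left _ _
          have m2 : min 0 (2 * xh i * (-v i) / μ ^ 2) ≤ 0 := min_le_left _ _
          linarith
        · simp only [if_neg hc1, if_neg hc2]
          linarith
    have hs0 : ∑ i, (qdef μ xh v i + qdef μ xh (-v) i) = 0 := by
      apply le_antisymm (Finset.sum_nonpos (fun i _ => hterm i))
      rw [Finset.sum_add_distrib]
      linarith
    have hzero := (Finset.sum_eq_zero_iff_of_nonpos (fun i _ => hterm i)).mp hs0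
      j (Finset.mem_univ j)
    have hjlt : ¬ |xh j| < μ := by rw [hj]; exact lt_irrefl μ
    rw [qdef, qdef] at hzero
    simp only [if_neg hjlt, if_pos hj, Pi.neg_apply, hvj] at hzero
    have m1 : min 0 (2 * xh j * (-1) / μ ^ 2) ≤ 0 := min_le_left _ _
    have m2 : min 0 (2 * xh j * (-(-1:ℝ)) / μ ^ 2) ≤ 0 := min_le_left _ _
    have e1 : min 0 (2 * xh j * (-1) / μ ^ 2) = 0 := by linarith
    have e2 : min 0 (2 * xh j * (-(-1:ℝ)) / μ ^ 2) = 0 := by linarith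
    have p1 : (0:ℝ) ≤ 2 * xh j * (-1) / μ ^ 2 := by
      rw [min_eq_left_iff] at e1; exact e1
    have p2 : (0:ℝ) ≤ 2 * xh j * (-(-1:ℝ)) / μ ^ 2 := by
      rw [min_eq_left_iff] at e2; exact e2
    have hx0 : xh j = 0 := by
      have q1 : (0:ℝ) ≤ -(2 * xh j) := by
        have := (le_div_iff₀ hμ2).mp p1
        nlinarith
      have q2 : (0:ℝ) ≤ 2 * xh j := by
        have := (le_div_iff₀ hμ2).mp p2
        nlinarith
      linarith
    rw [hx0, abs_zero] at hj
    linarith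
  -- stationarity
  refine ⟨hnk, ?_⟩
  set g : Fin n → ℝ := fun i => (2 / μ ^ 2) * (1 - Hfilter μ xh i) * xh i with hg
  have hgq : ∀ (v : Fin n → ℝ) (i : Fin n), qdef μ xh v i = g i * v i := by
    intro v i
    unfold qdef
    by_cases hc1 : |xh i| < μ
    · rw [if_pos hc1]
      have hH : Hfilter μ xh i = 0 := by
        unfold Hfilter
        rw [if_neg (by linarith [hc1])]
      have hgi : g i = 2 / μ ^ 2 * (1 - Hfilter μ xh i) * xh i := rfl
      rw [hgi, hH]
      ring
    · have hc2 : μ < |xh i| := lt_of_le_of_ne (not_lt.mp hc1) (Ne.symm (hnk i))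
      rw [if_neg hc1, if_neg (hnk i)]
      have hH : Hfilter μ xh i = 1 := by
        unfold Hfilter
        rw [if_pos hc2]
      have hgi : g i = 2 / μ ^ 2 * (1 - Hfilter μ xh i) * xh i := rfl
      rw [hgi, hH]
      ring
  have horth : ∀ v : Fin n → ℝ, A.mulVec v = 0 → dotProduct g v = 0 := by
    intro v hv
    have h1 := hdd v hv
    have h2 := hdd (-v) (by rw [Matrix.mulVec_neg, hv, neg_zero])
    rw [Finset.sum_congr rfl (fun i _ => hgq v i)] at h1
    rw [Finset.sum_congr rfl (fun i _ => hgq (-v) i)] at h2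
    unfold dotProduct
    have : ∑ i, g i * (-v) i = -∑ i, g i * v i := by
      rw [← Finset.sum_neg_distrib]
      exact Finset.sum_congr rfl (fun i _ => by simp)
    rw [this] at h2
    linarith
  -- rank A = m and surjectivity of A Aᵀ
  have hj0 : (0 : ℕ) < n := lt_of_le_of_lt (Nat.zero_le m) hmn
  have hAsurj : Function.Surjective A.mulVecLin := by
    intro c
    obtain ⟨u, hu⟩ := surj_of_rank _ (hA ⟨0, hj0⟩) c
    refine ⟨fun k => if h : k = (⟨0, hj0⟩ : Fin n) then 0 else u ⟨k, h⟩, ?_⟩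
    funext i
    have hui := congrFun hu i
    simp only [Matrix.mulVecLin_apply] at hui ⊢
    unfold Matrix.mulVec dotProduct at hui ⊢
    simp only [Matrix.submatrix_apply, id_eq] at hui
    rw [sum_split (⟨0, hj0⟩ : Fin n)]
    simp only [dif_pos rfl]
    have hcong : ∀ s : {k : Fin n // k ≠ (⟨0, hj0⟩ : Fin n)},
        A i s.val * (if h : s.val = (⟨0, hj0⟩ : Fin n) then (0:ℝ) else u ⟨s.val, h⟩)
          = A i s.val * u s := by
      intro s; rw [dif_neg s.prop]
    rw [Finset.sum_congr rfl (fun s _ => hcong s), hui]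
    simp
  have hrankA : A.rank = m := by
    have hle : A.rank ≤ m := A.rank_le_card_height.trans (by simp)
    have : LinearMap.range A.mulVecLin = ⊤ := LinearMap.range_eq_top.mpr hAsurj
    rw [Matrix.rank, this, finrank_top, Module.finrank_fintype_fun_eq_card, Fintype.card_fin]
  have hrankAAT : (A * A.transpose).rank = m := by
    rw [Matrix.rank_self_mul_transpose, hrankA]
  obtain ⟨z, hz⟩ := surj_of_rank _ hrankAAT (A.mulVec g)
  simp only [Matrix.mulVecLin_apply] at hz
  -- r := g - Aᵀ z is in the kernel, orthogonal to g, hence zero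
  set r : Fin n → ℝ := g - A.transpose.mulVec z with hr
  have hAr : A.mulVec r = 0 := by
    rw [hr, Matrix.mulVec_sub, Matrix.mulVec_mulVec, hz]
    simp
  have hgr : dotProduct g r = 0 := horth r hAr
  have hATz : dotProduct (A.transpose.mulVec z) r = 0 := by
    rw [Matrix.mulVec_transpose, ← Matrix.dotProduct_mulVec, hAr, dotProduct_zero]
  have hrr : dotProduct r r = 0 := by
    have : dotProduct r r = dotProduct g r
        - dotProduct (A.transpose.mulVec z) r := by
      rw [hr, sub_dotProduct]
    rw [this, hgr, hATz, sub_zero]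
  have hr0 : r = 0 := dotProduct_self_eq_zero.mp hrr
  refine ⟨-z, ?_, hfeas⟩
  show g + A.transpose.mulVec (-z) = 0
  rw [Matrix.mulVec_neg]
  rw [hr] at hr0
  funext i
  have := congrFun hr0 i
  simp only [Pi.sub_apply, Pi.zero_apply] at this
  simp only [Pi.add_apply, Pi.neg_apply, Pi.zero_apply]
  linarith
end

section
/- Let μ > 0 and define the surrogate function Q_μ(x, ω) = (1/μ²)‖(𝟏 − ω) ∘ x‖₂² + ‖ω‖₀ for x, ω ∈ ℝⁿ. Then for every x ∈ ℝⁿ: (i) Q_μ(x, ω) ≥ Φ_μ(x) for all ω ∈ ℝⁿ, and (ii) Q_μ(x, H_μ(x)) = Φ_μ(x); hence H_μ(x) is a global minimizer of ω ↦ Q_μ(x, ω) and min_ω Q_μ(x, ω) = Φ_μ(x). -/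
/-- ℓ⁰ "norm": number of nonzero entries. -/
noncomputable def norm0 {n : ℕ} (v : Fin n → ℝ) : ℕ :=
  (Finset.univ.filter fun i => v i ≠ 0).card

/-- Surrogate function Q_μ(x, ω) = (1/μ²)‖(1 − ω) ∘ x‖₂² + ‖ω‖₀. -/
noncomputable def Qsur {n : ℕ} (μ : ℝ) (x ω : Fin n → ℝ) : ℝ :=
  (1 / μ ^ 2) * ∑ i, ((1 - ω i) * x i) ^ 2 + norm0 ω

lemma Qsur_eq_sum {n : ℕ} (μ : ℝ) (x ω : Fin n → ℝ) :
    Qsur μ x ω = ∑ i, (((1 - ω i) * x i) ^ 2 / μ ^ 2 + if ω i ≠ 0 then (1:ℝ) else 0) := by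
  unfold Qsur norm0
  rw [Finset.sum_add_distrib, Finset.mul_sum]
  congr 1
  · exact Finset.sum_congr rfl (fun i _ => by ring)
  · rw [Finset.card_filter]
    push_cast
    rfl

theorem stmt16 {n : ℕ} (μ : ℝ) (hμ : 0 < μ) :
    ∀ x : Fin n → ℝ,
      (∀ ω : Fin n → ℝ, PhiTH μ x ≤ Qsur μ x ω) ∧
      Qsur μ x (Hfilter μ x) = PhiTH μ x := by
  intro x
  have hμ2 : (0:ℝ) < μ ^ 2 := by positivity
  constructor
  · intro ω
    rw [Qsur_eq_sum, PhiTH]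
    apply Finset.sum_le_sum
    intro i _
    unfold phiTH
    by_cases h : ω i = 0
    · simp only [h, ne_eq, not_true_eq_false, if_neg, not_false_eq_true, sub_zero, one_mul,
        add_zero, if_false]
      exact min_le_right _ _
    · simp only [h, ne_eq, not_false_eq_true, if_pos, if_true]
      exact le_trans (min_le_left _ _) (le_add_of_nonneg_left (by positivity))
  · rw [Qsur_eq_sum, PhiTH]
    apply Finset.sum_congr rfl
    intro i _
    unfold phiTH Hfilter
    by_cases h : μ < |x i|
    · have h1 : (1:ℝ) ≤ x i ^ 2 / μ ^ 2 := by
        rw [le_div_iff₀ hμ2, one_mul]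
        have := sq_abs (x i)
        nlinarith [abs_nonneg (x i)]
      simp [h, min_eq_left h1]
    · have h2 : x i ^ 2 / μ ^ 2 ≤ 1 := by
        rw [div_le_one hμ2]
        push_neg at h
        nlinarith [sq_abs (x i), abs_nonneg (x i), h]
      simp [h, min_eq_right h2]
end

section
/- Let λ > 0, c ∈ ℝⁿ, A be a real m × n matrix, and D be an n × n diagonal matrix whose diagonal entries all lie in {0, 1}. Suppose that every nonzero v ∈ ℝⁿ with A v = 0 satisfies ‖v‖₀ > card{i : D_{ii} = 0}. Then the matrix AᵀA + λD is invertible; consequently, the linear system (AᵀA + λD) x = c has a unique solution x, and ‖x‖₂ ≤ ‖(AᵀA + λD)^{-1}‖₂ ‖c‖₂. -/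
lemma norm2_eq {m : ℕ} (u : Fin m → ℝ) :
    norm2 u = ‖(WithLp.equiv 2 (Fin m → ℝ)).symm u‖ := by
  rw [EuclideanSpace.norm_eq, norm2]
  congr 1
  apply Finset.sum_congr rfl
  intro i _
  rw [Real.norm_eq_abs, sq_abs]
  rfl

open scoped Matrix in
theorem stmt17 {m n : ℕ} (lam : ℝ) (hlam : 0 < lam) (c : Fin n → ℝ)
    (A : Matrix (Fin m) (Fin n) ℝ) (d : Fin n → ℝ)
    (hd : ∀ i, d i = 0 ∨ d i = 1)
    (hker : ∀ v : Fin n → ℝ, v ≠ 0 → A.mulVec v = 0 →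
      (Finset.univ.filter fun i => d i = 0).card < norm0 v) :
    IsUnit (A.transpose * A + lam • Matrix.diagonal d) ∧
    (∃! x : Fin n → ℝ, (A.transpose * A + lam • Matrix.diagonal d).mulVec x = c) ∧
    (∀ x : Fin n → ℝ, (A.transpose * A + lam • Matrix.diagonal d).mulVec x = c →
      norm2 x ≤ opNorm2 (A.transpose * A + lam • Matrix.diagonal d)⁻¹ * norm2 c) := by
  set M := A.transpose * A + lam • Matrix.diagonal d with hM
  -- injectivity of mulVec
  have hkey : ∀ v : Fin n → ℝ, M.mulVec v = 0 → v = 0 := by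
    intro v hv
    by_contra hv0
    -- quadratic form
    have hq : v ⬝ᵥ M.mulVec v = 0 := by rw [hv, dotProduct_zero]
    have hsplit : v ⬝ᵥ M.mulVec v =
        (A.mulVec v) ⬝ᵥ (A.mulVec v) + lam * ∑ i, d i * v i ^ 2 := by
      rw [hM, Matrix.add_mulVec, dotProduct_add, ← Matrix.mulVec_mulVec,
        Matrix.dotProduct_mulVec, Matrix.vecMul_transpose]
      congr 1
      rw [Matrix.smul_mulVec, dotProduct_smul]
      simp only [smul_eq_mul, dotProduct]
      simp only [Finset.mul_sum]
      apply Finset.sum_congr rfl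
      intro i _
      rw [Matrix.mulVec_diagonal]
      ring
    have h1 : 0 ≤ (A.mulVec v) ⬝ᵥ (A.mulVec v) :=
      Finset.sum_nonneg fun i _ => mul_self_nonneg _
    have h2 : ∀ i ∈ Finset.univ, (0:ℝ) ≤ d i * v i ^ 2 := by
      intro i _
      rcases hd i with h | h <;> simp [h, sq_nonneg]
    have h2' : 0 ≤ lam * ∑ i, d i * v i ^ 2 :=
      mul_nonneg hlam.le (Finset.sum_nonneg h2)
    have hA0 : (A.mulVec v) ⬝ᵥ (A.mulVec v) = 0 := by linarith [hq, hsplit.symm.trans hq]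
    have hAv : A.mulVec v = 0 := dotProduct_self_eq_zero.mp hA0
    have hsum : lam * ∑ i, d i * v i ^ 2 = 0 := by
      rw [hsplit, hAv] at hq
      simpa using hq
    have hsum' : ∑ i, d i * v i ^ 2 = 0 := by
      rcases mul_eq_zero.mp hsum with h | h
      · exact absurd h hlam.ne'
      · exact h
    have hzero : ∀ i ∈ Finset.univ, d i * v i ^ 2 = 0 :=
      (Finset.sum_eq_zero_iff_of_nonneg h2).mp hsum'
    -- if v i ≠ 0 then d i = 0
    have hsub : (Finset.univ.filter fun i => v i ≠ 0) ⊆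
        (Finset.univ.filter fun i => d i = 0) := by
      intro i hi
      simp only [Finset.mem_filter, Finset.mem_univ, true_and] at hi ⊢
      have := hzero i (Finset.mem_univ i)
      rcases mul_eq_zero.mp this with h | h
      · exact h
      · exfalso
        exact hi (pow_eq_zero_iff two_ne_zero |>.mp h)
    have := hker v hv0 hAv
    rw [norm0] at this
    exact absurd (Finset.card_le_card hsub) (not_le.mpr this)
  have hinj : Function.Injective M.mulVec := by
    intro x y hxy
    have h0 : M.mulVec (x - y) = 0 := by
      rw [Matrix.mulVec_sub, hxy, sub_self]
    have := hkey _ h0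
    exact sub_eq_zero.mp this
  have hU : IsUnit M := Matrix.mulVec_injective_iff_isUnit.mp hinj
  have hdet : IsUnit M.det := (Matrix.isUnit_iff_isUnit_det M).mp hU
  have hsol : M.mulVec (M⁻¹.mulVec c) = c := by
    rw [Matrix.mulVec_mulVec, Matrix.mul_nonsing_inv _ hdet, Matrix.one_mulVec]
  refine ⟨hU, ⟨M⁻¹.mulVec c, hsol, fun y hy => hinj (by rw [hy, hsol])⟩, ?_⟩
  intro x hx
  have hx' : x = M⁻¹.mulVec c := by
    apply hinj
    rw [hx, hsol]
  subst hx'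
  rw [norm2_eq, norm2_eq, opNorm2]
  have := (LinearMap.toContinuousLinearMap (Matrix.toEuclideanLin M⁻¹)).le_opNorm
    ((WithLp.equiv 2 (Fin n → ℝ)).symm c)
  have heq : (LinearMap.toContinuousLinearMap (Matrix.toEuclideanLin M⁻¹))
      ((WithLp.equiv 2 (Fin n → ℝ)).symm c)
      = (WithLp.equiv 2 (Fin n → ℝ)).symm (M⁻¹.mulVec c) := rfl
  rw [heq] at this
  exact this
end
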